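/- A pure 1-dimensional simplicial complex (Δ, {∅}) relative to the empty-set face is partitionable if and only if every connected component of Δ has at least as many edges as vertices. -/

import Mathlib

open Finset

variable {V : Type*}

/-- A (finite abstract) simplicial complex: a family of finite sets closed under subsets. -/
def IsComplex (Δ : Finset (Finset V)) : Prop :=
  ∀ σ ∈ Δ, ∀ τ ⊆ σ, τ ∈ Δ

/-- A facet of the relative complex `(Δ, Γ)`: a maximal face of `Δ \ Γ`. -/
def IsFacet [DecidableEq V] (Δ Γ : Finset (Finset V)) (σ : Finset V) : Prop :=
  σ ∈ Δ \ Γ ∧ ∀ τ ∈ Δ \ Γ, σ ⊆ τ → σ = τ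

/-- The relative complex `(Δ, Γ)` is partitionable: its faces `Δ \ Γ` decompose as a
disjoint union of intervals `[R σ, σ]` topped by facets `σ`. -/
def IsPartitionable [DecidableEq V] (Δ Γ : Finset (Finset V)) : Prop :=
  ∃ (F : Finset (Finset V)) (R : Finset V → Finset V),
    (∀ σ ∈ F, IsFacet Δ Γ σ) ∧
    (∀ σ ∈ F, R σ ⊆ σ) ∧
    (∀ σ ∈ F, ∀ ρ : Finset V, R σ ⊆ ρ → ρ ⊆ σ → ρ ∈ Δ \ Γ) ∧
    (∀ ρ ∈ Δ \ Γ, ∃! σ : Finset V, σ ∈ F ∧ R σ ⊆ ρ ∧ ρ ⊆ σ)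

/-- The pure 1-dimensional simplicial complex associated to a graph `G`:
the empty face, the vertices, and the edges. -/
def graphComplex [Fintype V] [DecidableEq V] (G : SimpleGraph V) [DecidableRel G.Adj] :
    Finset (Finset V) :=
  Finset.univ.filter
    (fun σ => σ.card ≤ 2 ∧ ∀ u ∈ σ, ∀ v ∈ σ, u ≠ v → G.Adj u v)


noncomputable def e2f [DecidableEq V] (e : Sym2 V) : Finset V :=
  Sym2.lift ⟨fun a b => {a, b}, fun a b => Finset.pair_comm a b⟩ e

lemma mem_e2f [DecidableEq V] {x : V} {e : Sym2 V} : x ∈ e2f e ↔ x ∈ e := by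
  induction e using Sym2.ind with
  | _ a b => simp [e2f, Sym2.mem_iff]

lemma e2f_inj [DecidableEq V] {e e' : Sym2 V} (h : e2f e = e2f e') : e = e' := by
  induction e using Sym2.ind with
  | _ a b =>
    induction e' using Sym2.ind with
    | _ c d =>
      have h1 : a ∈ e2f (s(c,d) : Sym2 V) := h ▸ (mem_e2f.2 (by simp))
      have h2 : b ∈ e2f (s(c,d) : Sym2 V) := h ▸ (mem_e2f.2 (by simp))
      have h3 : c ∈ e2f (s(a,b) : Sym2 V) := h ▸ (mem_e2f.2 (by simp))
      have h4 : d ∈ e2f (s(a,b) : Sym2 V) := h ▸ (mem_e2f.2 (by simp))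
      rw [mem_e2f, Sym2.mem_iff] at h1 h2 h3 h4
      rw [Sym2.eq_iff]
      tauto

lemma exists_closer (G' : SimpleGraph V) (r : V) :
    ∃ n : V → V, ∀ v, v ≠ r → G'.Reachable v r →
      G'.Adj v (n v) ∧ G'.dist (n v) r + 1 = G'.dist v r := by
  have h : ∀ v, ∃ b, v ≠ r → G'.Reachable v r →
      G'.Adj v b ∧ G'.dist b r + 1 = G'.dist v r := by
    intro v
    by_cases hv : v ≠ r ∧ G'.Reachable v r
    · obtain ⟨hne, hr⟩ := hv
      obtain ⟨p, hp⟩ := hr.exists_walk_length_eq_dist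
      cases p with
      | nil => exact absurd rfl hne
      | cons h' q =>
        rename_i b
        refine ⟨b, fun _ _ => ⟨h', ?_⟩⟩
        have h1 : G'.dist b r ≤ q.length := G'.dist_le q
        have h2 : G'.dist v r ≤ G'.dist b r + 1 := by
          obtain ⟨q', hq'⟩ := (q.reachable).exists_walk_length_eq_dist
          calc G'.dist v r ≤ (SimpleGraph.Walk.cons h' q').length := G'.dist_le _
          _ = G'.dist b r + 1 := by simp [hq']
        simp only [SimpleGraph.Walk.length_cons] at hp
        omega
    · exact ⟨r, fun h1 h2 => absurd ⟨h1, h2⟩ hv⟩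
  exact ⟨fun v => (h v).choose, fun v => (h v).choose_spec⟩

open scoped Classical in
lemma hall_cond [Fintype V] [DecidableEq V] (G : SimpleGraph V) [DecidableRel G.Adj]
    (hiso : ∀ v : V, ∃ u : V, G.Adj v u)
    (hcomp : ∀ c : G.ConnectedComponent,
        (Finset.univ.filter (fun v : V => v ∈ c.supp)).card ≤
          (G.edgeFinset.filter (fun e => ∀ v ∈ e, v ∈ c.supp)).card)
    (S : Finset V) : S.card ≤ (S.biUnion (fun v => G.incidenceFinset v)).card := by
  rcases S.eq_empty_or_nonempty with rfl | ⟨vstar, hvstar⟩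
  · simp
  set G' : SimpleGraph V := ⟨fun u v => G.Adj u v ∧ u ∈ S ∧ v ∈ S,
    ⟨fun u v h => ⟨h.1.symm, h.2.2, h.2.1⟩⟩,
    ⟨fun u h => G.loopless.irrefl u h.1⟩⟩ with hG'
  have hG'le : G' ≤ G := fun u v h => h.1
  set N := S.biUnion (fun v => G.incidenceFinset v) with hN
  have hmemN : ∀ e : Sym2 V, e ∈ N ↔ e ∈ G.edgeSet ∧ ∃ x ∈ e, x ∈ S := by
    intro e
    simp only [hN, Finset.mem_biUnion, SimpleGraph.mem_incidenceFinset,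
      SimpleGraph.incidenceSet, Set.mem_setOf_eq]
    constructor
    · rintro ⟨x, hxS, hE, hxe⟩; exact ⟨hE, x, hxe, hxS⟩
    · rintro ⟨hE, x, hxe, hxS⟩; exact ⟨x, hxS, hE, hxe⟩
  set mk' := G'.connectedComponentMk with hmk'
  set assign : Sym2 V → G'.ConnectedComponent := fun e =>
    if h : ∃ x ∈ e, x ∈ S then mk' h.choose else mk' vstar with hassign
  have same_comp : ∀ e ∈ G.edgeSet, ∀ x ∈ e, ∀ y ∈ e, x ∈ S → y ∈ S → mk' x = mk' y := by
    intro e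
    induction e using Sym2.ind with
    | _ a b =>
      intro he x hx y hy hxS hyS
      rw [SimpleGraph.mem_edgeSet] at he
      rw [Sym2.mem_iff] at hx hy
      have adj : ∀ p q : V, p ∈ ({a, b} : Set V) → q ∈ ({a,b} : Set V) → p ≠ q → G'.Adj p q → mk' p = mk' q :=
        fun p q _ _ _ h => SimpleGraph.ConnectedComponent.sound h.reachable
      rcases hx with rfl | rfl <;> rcases hy with rfl | rfl
      · rfl
      · exact SimpleGraph.ConnectedComponent.sound (SimpleGraph.Adj.reachable ⟨he, hxS, hyS⟩)
      · exact SimpleGraph.ConnectedComponent.sound (SimpleGraph.Adj.reachable ⟨he.symm, hxS, hyS⟩)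
      · rfl
  have claim_assign : ∀ e ∈ G.edgeSet, ∀ x ∈ e, x ∈ S → assign e = mk' x := by
    intro e he x hx hxS
    have hex : ∃ x ∈ e, x ∈ S := ⟨x, hx, hxS⟩
    rw [hassign]
    simp only [dif_pos hex]
    exact same_comp e he _ hex.choose_spec.1 x hx hex.choose_spec.2 hxS
  have himg : S.image mk' ⊆ N.image assign := by
    intro c' hc'
    obtain ⟨v, hvS, rfl⟩ := Finset.mem_image.1 hc'
    obtain ⟨u, hu⟩ := hiso v
    have heN : (s(v, u) : Sym2 V) ∈ N := (hmemN _).2 ⟨(G.mem_edgeSet).2 hu, v, by simp, hvS⟩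
    exact Finset.mem_image.2 ⟨s(v, u), heN,
      claim_assign _ ((G.mem_edgeSet).2 hu) v (by simp) hvS⟩
  have key : ∀ c' ∈ S.image mk',
      (S.filter (fun v => mk' v = c')).card ≤ (N.filter (fun e => assign e = c')).card := by
    intro c' hc'
    obtain ⟨v₀, hv₀S, rfl⟩ := Finset.mem_image.1 hc'
    have suppS : ∀ x, mk' x = mk' v₀ → x ∈ S := by
      intro x hx
      obtain ⟨p⟩ := SimpleGraph.ConnectedComponent.exact hx
      cases p with
      | nil => exact hv₀S
      | cons h' q => exact h'.2.1
    by_cases hclosed : ∀ u w, mk' u = mk' v₀ → G.Adj u w → mk' w = mk' v₀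
    · -- closed case: the G'-component is a full G-component
      have haux : ∀ (a x : V) (p : G.Walk a x), mk' a = mk' v₀ → mk' x = mk' v₀ := by
        intro a x p
        induction p with
        | nil => exact fun h => h
        | cons h' q ih => exact fun h => ih (hclosed _ _ h h')
      have hxy : ∀ x, mk' x = mk' v₀ ↔
          G.connectedComponentMk x = G.connectedComponentMk v₀ := by
        intro x
        constructor
        · intro h
          exact SimpleGraph.ConnectedComponent.sound
            ((SimpleGraph.ConnectedComponent.exact h).mono hG'le)
        · intro h
          obtain ⟨p⟩ := (SimpleGraph.ConnectedComponent.exact h).symm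
          exact haux v₀ x p rfl
      have step1 : S.filter (fun v => mk' v = mk' v₀)
          = Finset.univ.filter (fun v : V => v ∈ (G.connectedComponentMk v₀).supp) := by
        ext x
        simp only [Finset.mem_filter, Finset.mem_univ, true_and,
          SimpleGraph.ConnectedComponent.mem_supp_iff]
        rw [← hxy]
        exact ⟨fun h => h.2, fun h => ⟨suppS x h, h⟩⟩
      have step2 : G.edgeFinset.filter
            (fun e => ∀ v ∈ e, v ∈ (G.connectedComponentMk v₀).supp)
          ⊆ N.filter (fun e => assign e = mk' v₀) := by
        intro e he
        rw [Finset.mem_filter, SimpleGraph.mem_edgeFinset] at he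
        obtain ⟨heE, hall⟩ := he
        induction e using Sym2.ind with
        | _ a b =>
          have haS : mk' a = mk' v₀ :=
            (hxy a).2 ((SimpleGraph.ConnectedComponent.mem_supp_iff _ _).1 (hall a (by simp)))
          have haS' : a ∈ S := suppS a haS
          rw [Finset.mem_filter]
          exact ⟨(hmemN _).2 ⟨heE, a, by simp, haS'⟩,
            (claim_assign _ heE a (by simp) haS').trans haS⟩
      calc (S.filter (fun v => mk' v = mk' v₀)).card
          = (Finset.univ.filter (fun v : V => v ∈ (G.connectedComponentMk v₀).supp)).card := by
            rw [step1]
        _ ≤ (G.edgeFinset.filter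
              (fun e => ∀ v ∈ e, v ∈ (G.connectedComponentMk v₀).supp)).card :=
            hcomp (G.connectedComponentMk v₀)
        _ ≤ _ := Finset.card_le_card step2
    · -- boundary case
      push_neg at hclosed
      obtain ⟨u, w, hu, huw, hw⟩ := hclosed
      have huS : u ∈ S := suppS u hu
      have hwS : w ∉ S := by
        intro hwS
        exact hw ((SimpleGraph.ConnectedComponent.connectedComponentMk_eq_of_adj
          (G := G') ⟨huw, huS, hwS⟩).symm.trans hu)
      obtain ⟨n, hn⟩ := exists_closer G' u
      have hreach : ∀ x, mk' x = mk' v₀ → G'.Reachable x u :=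
        fun x hx => SimpleGraph.ConnectedComponent.exact (hx.trans hu.symm)
      apply Finset.card_le_card_of_injOn (fun x => if x = u then s(u, w) else s(x, n x))
      · intro x hx
        rw [Finset.mem_coe, Finset.mem_filter] at hx
        rw [Finset.mem_coe]
        obtain ⟨hxS, hxc⟩ := hx
        by_cases hxu : x = u
        · subst hxu
          simp only [if_pos rfl]
          rw [Finset.mem_filter]
          exact ⟨(hmemN _).2 ⟨(G.mem_edgeSet).2 huw, x, by simp, hxS⟩,
            (claim_assign _ ((G.mem_edgeSet).2 huw) x (by simp) hxS).trans hxc⟩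
        · have hxadj := hn x hxu (hreach x hxc)
          have hE : (s(x, n x) : Sym2 V) ∈ G.edgeSet :=
            (G.mem_edgeSet).2 (hG'le hxadj.1)
          simp only [if_neg hxu]
          rw [Finset.mem_filter]
          exact ⟨(hmemN _).2 ⟨hE, x, by simp, hxS⟩,
            (claim_assign _ hE x (by simp) hxS).trans hxc⟩
      · intro x hx y hy hxy
        rw [Finset.coe_filter, Set.mem_setOf_eq] at hx hy
        by_cases hxu : x = u <;> by_cases hyu : y = u
        · rw [hxu, hyu]
        · exfalso
          simp only [if_pos hxu, if_neg hyu] at hxy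
          rw [Sym2.eq_iff] at hxy
          rcases hxy with ⟨h1, h2⟩ | ⟨h1, h2⟩
          · exact hyu h1.symm
          · exact hwS (h2 ▸ hy.1)
        · exfalso
          simp only [if_neg hxu, if_pos hyu] at hxy
          rw [Sym2.eq_iff] at hxy
          rcases hxy with ⟨h1, h2⟩ | ⟨h1, h2⟩
          · exact hxu h1
          · exact hwS (h1 ▸ hx.1)
        · simp only [if_neg hxu, if_neg hyu] at hxy
          rw [Sym2.eq_iff] at hxy
          rcases hxy with ⟨h1, _⟩ | ⟨h1, h2⟩
          · exact h1
          · exfalso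
            have d1 := (hn x hxu (hreach x hx.2)).2
            have d2 := (hn y hyu (hreach y hy.2)).2
            rw [h2] at d1
            rw [← h1] at d2
            omega
  calc S.card
      = ∑ c' ∈ S.image mk', (S.filter (fun v => mk' v = c')).card :=
        Finset.card_eq_sum_card_fiberwise (fun x hx => Finset.mem_image_of_mem _ hx)
    _ ≤ ∑ c' ∈ S.image mk', (N.filter (fun e => assign e = c')).card :=
        Finset.sum_le_sum key
    _ ≤ ∑ c' ∈ N.image assign, (N.filter (fun e => assign e = c')).card :=
        Finset.sum_le_sum_of_subset himg
    _ = N.card :=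
        (Finset.card_eq_sum_card_fiberwise (fun e he => Finset.mem_image_of_mem _ he)).symm

lemma mem_graphComplex_iff [Fintype V] [DecidableEq V] (G : SimpleGraph V) [DecidableRel G.Adj]
    (σ : Finset V) :
    σ ∈ graphComplex G ↔ σ.card ≤ 2 ∧ ∀ u ∈ σ, ∀ v ∈ σ, u ≠ v → G.Adj u v := by
  simp [graphComplex]

lemma e2f_pair [DecidableEq V] (a b : V) : e2f (s(a, b) : Sym2 V) = {a, b} := rfl

lemma card_e2f [DecidableEq V] {G : SimpleGraph V} {e : Sym2 V} (he : e ∈ G.edgeSet) :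
    (e2f e).card = 2 := by
  induction e using Sym2.ind with
  | _ a b =>
    rw [SimpleGraph.mem_edgeSet] at he
    rw [e2f_pair]
    exact Finset.card_pair he.ne

open scoped Classical in
/-- A graph with no isolated vertices is partitionable relative to `{∅}` iff every
connected component has at least as many edges as vertices. -/
theorem graph_partitionable_iff_edges_ge_vertices [Fintype V] [DecidableEq V]
    (G : SimpleGraph V) [DecidableRel G.Adj]
    (hiso : ∀ v : V, ∃ u : V, G.Adj v u) :
    IsPartitionable (graphComplex G) {∅} ↔
      ∀ c : G.ConnectedComponent,
        (Finset.univ.filter (fun v : V => v ∈ c.supp)).card ≤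
          (G.edgeFinset.filter (fun e => ∀ v ∈ e, v ∈ c.supp)).card := by
  constructor
  · rintro ⟨F, R, h1, h2, h3, h4⟩ c
    have hv : ∀ v : V, ({v} : Finset V) ∈ graphComplex G \ {∅} := by
      intro v
      rw [Finset.mem_sdiff, mem_graphComplex_iff, Finset.mem_singleton]
      refine ⟨⟨by simp, ?_⟩, by simp⟩
      intro u hu w hw huw
      rw [Finset.mem_singleton] at hu hw
      exact absurd (hu.trans hw.symm) huw
    have hex := fun v : V => h4 {v} (hv v)
    obtain ⟨σf, hσf⟩ := Classical.axiomOfChoice (fun v => (hex v).exists)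
    have hmemf : ∀ v, σf v ∈ graphComplex G \ {∅} := fun v => (h1 _ (hσf v).1).1
    have hinj : ∀ v w, σf v = σf w → v = w := by
      intro v w hvw
      by_contra hne
      have hRv : R (σf v) ⊆ {v} := (hσf v).2.1
      have hRw : R (σf v) ⊆ {w} := hvw ▸ (hσf w).2.1
      have hR : R (σf v) ⊆ ∅ := by
        intro x hx
        have e1 := Finset.mem_singleton.1 (hRv hx)
        have e2 := Finset.mem_singleton.1 (hRw hx)
        exact absurd (e1.symm.trans e2) hne
      have : (∅ : Finset V) ∈ graphComplex G \ {∅} :=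
        h3 _ (hσf v).1 ∅ (Finset.subset_empty.1 hR ▸ Finset.Subset.refl _) (Finset.empty_subset _)
      simp [Finset.mem_sdiff] at this
    have hpair : ∀ v, ∃ u, G.Adj v u ∧ σf v = {v, u} := by
      intro v
      have hvmem : v ∈ σf v := (hσf v).2.2 (Finset.mem_singleton_self v)
      have hcard : (σf v).card ≤ 2 := ((mem_graphComplex_iff G _).1 (Finset.mem_sdiff.1 (hmemf v)).1).1
      have hadjf := ((mem_graphComplex_iff G _).1 (Finset.mem_sdiff.1 (hmemf v)).1).2
      obtain ⟨w, hw⟩ := hiso v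
      have hne : σf v ≠ {v} := by
        intro hsing
        have hτ : ({v, w} : Finset V) ∈ graphComplex G \ {∅} := by
          rw [Finset.mem_sdiff, mem_graphComplex_iff, Finset.mem_singleton]
          refine ⟨⟨Finset.card_insert_le _ _ |>.trans (by simp), ?_⟩, by simp⟩
          intro a ha b hb hab
          simp only [Finset.mem_insert, Finset.mem_singleton] at ha hb
          rcases ha with rfl | rfl <;> rcases hb with rfl | rfl
          · exact absurd rfl hab
          · exact hw
          · exact hw.symm
          · exact absurd rfl hab
        have := (h1 _ (hσf v).1).2 _ hτ (by rw [hsing]; intro x hx; simp [Finset.mem_singleton.1 hx])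
        rw [hsing] at this
        have : w ∈ ({v} : Finset V) := this ▸ (by simp : w ∈ ({v, w} : Finset V))
        exact G.ne_of_adj hw.symm (Finset.mem_singleton.1 this)
      have hcard2 : (σf v).card = 2 := by
        have h1c : 1 ≤ (σf v).card := Finset.card_pos.2 ⟨v, hvmem⟩
        rcases Nat.lt_or_ge (σf v).card 2 with h | h
        · exfalso
          have : (σf v).card = 1 := by omega
          obtain ⟨a, ha⟩ := Finset.card_eq_one.1 this
          rw [ha] at hvmem
          exact hne (ha.trans (by rw [Finset.mem_singleton.1 hvmem]))
        · omega
      obtain ⟨a, b, hab, hs⟩ := Finset.card_eq_two.1 hcard2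
      rw [hs] at hvmem
      rcases Finset.mem_insert.1 hvmem with rfl | hb
      · exact ⟨b, hadjf v (by rw [hs]; simp) b (by rw [hs]; simp) hab, hs⟩
      · rw [Finset.mem_singleton] at hb
        subst hb
        exact ⟨a, hadjf v (by rw [hs]; simp) a (by rw [hs]; simp) (Ne.symm hab), by
          rw [hs, Finset.pair_comm]⟩
    choose ot hot using hpair
    apply Finset.card_le_card_of_injOn (fun v => (s(v, ot v) : Sym2 V))
    · intro v hvmem
      rw [Finset.mem_coe, Finset.mem_filter] at hvmem ⊢
      refine ⟨SimpleGraph.mem_edgeFinset.2 ((G.mem_edgeSet).2 (hot v).1), ?_⟩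
      intro x hx
      rw [Sym2.mem_iff] at hx
      rcases hx with rfl | rfl
      · exact hvmem.2
      · rw [SimpleGraph.ConnectedComponent.mem_supp_iff] at hvmem ⊢
        rw [← hvmem.2]
        exact (SimpleGraph.ConnectedComponent.connectedComponentMk_eq_of_adj (hot v).1).symm
    · intro v _ w _ hvw
      simp only [Sym2.eq_iff] at hvw
      rcases hvw with ⟨rfl, _⟩ | ⟨h1', h2'⟩
      · rfl
      · apply hinj
        rw [(hot v).2, (hot w).2, h2', h1']
        exact Finset.pair_comm _ _
  · intro hcomp
    obtain ⟨f, hfinj, hf⟩ :=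
      (Finset.all_card_le_biUnion_card_iff_exists_injective
        (fun v : V => G.incidenceFinset v)).1 (hall_cond G hiso hcomp)
    have hfE : ∀ v, f v ∈ G.edgeSet := by
      intro v
      have := hf v
      rw [SimpleGraph.mem_incidenceFinset] at this
      exact this.1
    have hvf : ∀ v, v ∈ f v := by
      intro v
      have := hf v
      rw [SimpleGraph.mem_incidenceFinset] at this
      exact this.2
    refine ⟨G.edgeFinset.image e2f,
      fun σ => if h : ∃ v, e2f (f v) = σ then {h.choose} else σ, ?_, ?_, ?_, ?_⟩
    all_goals {
      have hFmem : ∀ σ ∈ G.edgeFinset.image e2f, σ ∈ graphComplex G \ {∅} ∧ σ.card = 2 := by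
        intro σ hσ
        obtain ⟨e, he, rfl⟩ := Finset.mem_image.1 hσ
        rw [SimpleGraph.mem_edgeFinset] at he
        have hc2 := card_e2f he
        refine ⟨?_, hc2⟩
        rw [Finset.mem_sdiff, mem_graphComplex_iff, Finset.mem_singleton]
        refine ⟨⟨le_of_eq hc2, ?_⟩, fun h => by simp [h] at hc2⟩
        induction e using Sym2.ind with
        | _ a b =>
          rw [SimpleGraph.mem_edgeSet] at he
          intro u hu w hw huw
          rw [e2f_pair, Finset.mem_insert, Finset.mem_singleton] at hu hw
          rcases hu with rfl | rfl <;> rcases hw with rfl | rfl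
          · exact absurd rfl huw
          · exact he
          · exact he.symm
          · exact absurd rfl huw
      have hRchoose : ∀ v : V,
          (if h : ∃ w, e2f (f w) = e2f (f v) then ({h.choose} : Finset V) else e2f (f v)) = {v} := by
        intro v
        have hex : ∃ w, e2f (f w) = e2f (f v) := ⟨v, rfl⟩
        have hstep : (if h : ∃ w, e2f (f w) = e2f (f v) then ({h.choose} : Finset V)
            else e2f (f v)) = {hex.choose} := dif_pos hex
        rw [hstep, hfinj (e2f_inj hex.choose_spec)]
      have hchoose_mem : ∀ (σ : Finset V) (h : ∃ v, e2f (f v) = σ), h.choose ∈ σ := by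
        intro σ h
        have hs := h.choose_spec
        have hm : h.choose ∈ e2f (f h.choose) := mem_e2f.2 (hvf _)
        rwa [hs] at hm
      have hRsub : ∀ σ ∈ G.edgeFinset.image e2f,
          (if h : ∃ v, e2f (f v) = σ then ({h.choose} : Finset V) else σ) ⊆ σ := by
        intro σ hσ
        by_cases h : ∃ v, e2f (f v) = σ
        · rw [dif_pos h]
          exact Finset.singleton_subset_iff.2 (hchoose_mem σ h)
        · rw [dif_neg h]
      have hRne : ∀ σ ∈ G.edgeFinset.image e2f,
          (if h : ∃ v, e2f (f v) = σ then ({h.choose} : Finset V) else σ).Nonempty := by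
        intro σ hσ
        by_cases h : ∃ v, e2f (f v) = σ
        · rw [dif_pos h]; exact Finset.singleton_nonempty _
        · rw [dif_neg h]
          exact Finset.card_pos.1 (by rw [(hFmem σ hσ).2]; omega)
      first
      | -- facets
        (intro σ hσ
         refine ⟨(hFmem σ hσ).1, ?_⟩
         intro τ hτ hsub
         have hcτ : τ.card ≤ 2 := ((mem_graphComplex_iff G τ).1 (Finset.mem_sdiff.1 hτ).1).1
         exact Finset.eq_of_subset_of_card_le hsub (by rw [(hFmem σ hσ).2]; exact hcτ))
      | -- R ⊆ σ
        exact hRsub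
      | -- intervals in faces
        (intro σ hσ ρ hR hρ
         rw [Finset.mem_sdiff, mem_graphComplex_iff, Finset.mem_singleton]
         have hσΔ := (Finset.mem_sdiff.1 (hFmem σ hσ).1).1
         rw [mem_graphComplex_iff] at hσΔ
         refine ⟨⟨(Finset.card_le_card hρ).trans hσΔ.1,
           fun u hu w hw huw => hσΔ.2 u (hρ hu) w (hρ hw) huw⟩, ?_⟩
         intro hρe
         obtain ⟨x, hx⟩ := hRne σ hσ
         exact absurd (hρe ▸ hR hx) (Finset.notMem_empty x))
      | -- unique cover
        (intro ρ hρ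
         rw [Finset.mem_sdiff, mem_graphComplex_iff, Finset.mem_singleton] at hρ
         obtain ⟨⟨hcρ, hadjρ⟩, hρne⟩ := hρ
         have h1c : 1 ≤ ρ.card := Finset.card_pos.2 (Finset.nonempty_iff_ne_empty.2 hρne)
         rcases Nat.lt_or_ge ρ.card 2 with hlt | hge
         · -- ρ is a singleton {v}
           obtain ⟨v, rfl⟩ := Finset.card_eq_one.1 (by omega : ρ.card = 1)
           refine ⟨e2f (f v), ⟨Finset.mem_image_of_mem e2f (SimpleGraph.mem_edgeFinset.2 (hfE v)),
             by beta_reduce; exact le_of_eq (hRchoose v), Finset.singleton_subset_iff.2 (mem_e2f.2 (hvf v))⟩, ?_⟩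
           rintro σ ⟨hσF, hRσ, hvσ⟩
           beta_reduce at hRσ
           by_cases h : ∃ w, e2f (f w) = σ
           · rw [dif_pos h] at hRσ
             have : h.choose = v := Finset.singleton_subset_iff.1 hRσ |> Finset.mem_singleton.1
             rw [← h.choose_spec, this]
           · rw [dif_neg h] at hRσ
             exfalso
             have := (Finset.card_le_card hRσ).trans_eq (Finset.card_singleton v)
             rw [(hFmem σ hσF).2] at this
             omega
         · -- ρ has card 2, hence is itself a facet
           have hcρ2 : ρ.card = 2 := le_antisymm hcρ hge
           have hρF : ρ ∈ G.edgeFinset.image e2f := by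
             obtain ⟨a, b, hab, rfl⟩ := Finset.card_eq_two.1 hcρ2
             have hadj : G.Adj a b := hadjρ a (by simp) b (by simp) hab
             exact Finset.mem_image.2 ⟨s(a, b), SimpleGraph.mem_edgeFinset.2
               ((G.mem_edgeSet).2 hadj), e2f_pair a b⟩
           refine ⟨ρ, ⟨hρF, hRsub ρ hρF, Finset.Subset.refl ρ⟩, ?_⟩
           rintro σ ⟨hσF, hRσ, hρσ⟩
           exact (Finset.eq_of_subset_of_card_le hρσ (by rw [(hFmem σ hσF).2, hcρ2])).symm)
    }
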